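/- Suppose [τ_a, τ_b] ⊆ (0,1) is an interval on which f(s) > 0 for all s ∈ [τ_a, τ_b] and the escalation benefit m_H − m_L is strictly increasing on [τ_a, τ_b]. Then for every τ ∈ (τ_a, τ_b), letting α ∈ (0,1) be the unique weight with α·C(τ_a) + (1−α)·C(τ_b) = C(τ), the randomized mixture of the two endpoint thresholds strictly dominates the deterministic threshold at equal expected cost: α·U(τ_a) + (1−α)·U(τ_b) > U(τ). -/

import Mathlib

/-!
The escalation benefit `h = m_H - m_L` is the marginal quality gained per unit of score mass
moved to the expensive model, while the marginal cost is the constant `c_H`. Hence, parametrised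
by cost, quality is strictly convex wherever `f > 0` and `h` is strictly increasing: on `[τa, τ]`
the `f`-weighted mean of `h` is below `h τ`, on `[τ, τb]` it is above. So the point
`(C τ, U τ)` lies strictly below the chord through `(C τa, U τa)` and `(C τb, U τb)`, which is
exactly the claim.
-/

open Set MeasureTheory intervalIntegral

-- `hslope` is the secant-slope inequality `(v - u) / (z - x) < (w - v) / (y - z)`, cleared of denominators.
lemma exists_unique_weight_lt_chord {x y z u v w : ℝ} (hxz : x < z) (hzy : z < y)
    (hslope : (v - u) * (y - z) < (w - v) * (z - x)) :
    ∃ α ∈ Ioo (0:ℝ) 1, α * x + (1 - α) * y = z ∧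
      (∀ α' ∈ Ioo (0:ℝ) 1, α' * x + (1 - α') * y = z → α' = α) ∧
      α * u + (1 - α) * w > v := by
  have hxy : 0 < y - x := by linarith
  refine ⟨(y - z) / (y - x), ⟨by positivity, by rw [div_lt_one hxy]; linarith⟩, ?_, ?_, ?_⟩
  · field_simp
    ring
  · intro α' _ hα'
    rw [eq_div_iff hxy.ne']
    linarith
  · rw [gt_iff_lt, ← sub_pos]
    have hmix_sub : (y - z) / (y - x) * u + (1 - (y - z) / (y - x)) * w - v
        = ((w - v) * (z - x) - (v - u) * (y - z)) / (y - x) := by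
      field_simp
      ring
    rw [hmix_sub]
    exact div_pos (by linarith) hxy

section WeightedMean

variable {f h : ℝ → ℝ} {a b : ℝ}

lemma mul_integral_lt_integral_mul_of_strictMonoOn (hf : IntervalIntegrable f volume a b)
    (hhf : IntervalIntegrable (fun s => h s * f s) volume a b) (hab : a < b)
    (hpos : ∀ s ∈ Ioo a b, 0 < f s) (hmono : StrictMonoOn h (Icc a b)) :
    h a * ∫ s in a..b, f s < ∫ s in a..b, h s * f s := by
  have hint : 0 < ∫ s in a..b, (h s - h a) * f s := by
    refine intervalIntegral_pos_of_pos_on ?_ (fun s hs => ?_) hab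
    · simpa only [sub_mul] using hhf.sub (hf.const_mul (h a))
    · have := hmono (left_mem_Icc.2 hab.le) (Ioo_subset_Icc_self hs) hs.1
      exact mul_pos (sub_pos.2 this) (hpos s hs)
  simp only [sub_mul] at hint
  rw [integral_sub hhf (hf.const_mul (h a)), intervalIntegral.integral_const_mul] at hint
  linarith

lemma integral_mul_lt_mul_integral_of_strictMonoOn (hf : IntervalIntegrable f volume a b)
    (hhf : IntervalIntegrable (fun s => h s * f s) volume a b) (hab : a < b)
    (hpos : ∀ s ∈ Ioo a b, 0 < f s) (hmono : StrictMonoOn h (Icc a b)) :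
    ∫ s in a..b, h s * f s < h b * ∫ s in a..b, f s := by
  have hint : 0 < ∫ s in a..b, (h b - h s) * f s := by
    refine intervalIntegral_pos_of_pos_on ?_ (fun s hs => ?_) hab
    · simpa only [sub_mul] using (hf.const_mul (h b)).sub hhf
    · have := hmono (Ioo_subset_Icc_self hs) (right_mem_Icc.2 hab.le) hs.2
      exact mul_pos (sub_pos.2 this) (hpos s hs)
  simp only [sub_mul] at hint
  rw [integral_sub (hf.const_mul (h b)) hhf, intervalIntegral.integral_const_mul] at hint
  linarith

end WeightedMean

lemma integral_add_integral_sub_integral_add_integral {g k : ℝ → ℝ} (hg : Continuous g)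
    (hk : Continuous k) (a b x y : ℝ) :
    ((∫ s in a..y, g s) + ∫ s in y..b, k s) - ((∫ s in a..x, g s) + ∫ s in x..b, k s)
      = ∫ s in x..y, g s - k s := by
  have hgi : ∀ x y, IntervalIntegrable g volume x y := hg.intervalIntegrable
  have hki : ∀ x y, IntervalIntegrable k volume x y := hk.intervalIntegrable
  rw [integral_sub (hgi x y) (hki x y), ← integral_interval_sub_left (hgi a y) (hgi a x),
    ← integral_add_adjacent_intervals (hki x y) (hki y b)]
  ring

theorem two_model_cascade_randomization_beats_deterministic_general
    (f mL mH : ℝ → ℝ) (hf : Continuous f)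
    (hmL : Continuous mL) (hmH : Continuous mH)
    (cL cH : ℝ) (hcH : 0 < cH)
    (C U : ℝ → ℝ)
    (hC : ∀ τ, C τ = cL + cH * ∫ s in (0:ℝ)..τ, f s)
    (hU : ∀ τ, U τ = (∫ s in (0:ℝ)..τ, mH s * f s) + ∫ s in τ..(1:ℝ), mL s * f s)
    (τa τb : ℝ)
    (hfpos : ∀ s ∈ Set.Icc τa τb, 0 < f s)
    (hinc : StrictMonoOn (fun s => mH s - mL s) (Set.Icc τa τb))
    (τ : ℝ) (hτ : τ ∈ Set.Ioo τa τb) :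
    ∃ α ∈ Set.Ioo (0:ℝ) 1,
      α * C τa + (1 - α) * C τb = C τ ∧
      (∀ α' ∈ Set.Ioo (0:ℝ) 1, α' * C τa + (1 - α') * C τb = C τ → α' = α) ∧
      α * U τa + (1 - α) * U τb > U τ := by
  obtain ⟨hτa, hτb⟩ := hτ
  set h := fun s => mH s - mL s
  have hfi : ∀ x y, IntervalIntegrable f volume x y := hf.intervalIntegrable
  have hhfi : ∀ x y, IntervalIntegrable (fun s => h s * f s) volume x y :=
    fun x y => ((hmH.sub hmL).mul hf).intervalIntegrable x y
  have hC_sub (x y : ℝ) : C y - C x = cH * ∫ s in x..y, f s := by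
    rw [hC, hC, ← integral_interval_sub_left (hfi 0 y) (hfi 0 x)]
    ring
  have hU_sub (x y : ℝ) : U y - U x = ∫ s in x..y, h s * f s := by
    simp only [hU, h, sub_mul]
    exact integral_add_integral_sub_integral_add_integral (hmH.mul hf) (hmL.mul hf) 0 1 x y
  have hpos_left : ∀ s ∈ Ioo τa τ, 0 < f s := fun s hs => hfpos s ⟨hs.1.le, hs.2.le.trans hτb.le⟩
  have hpos_right : ∀ s ∈ Ioo τ τb, 0 < f s := fun s hs => hfpos s ⟨hτa.le.trans hs.1.le, hs.2.le⟩
  have hFa := intervalIntegral_pos_of_pos_on (hfi τa τ) hpos_left hτa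
  have hFb := intervalIntegral_pos_of_pos_on (hfi τ τb) hpos_right hτb
  have hGa := integral_mul_lt_mul_integral_of_strictMonoOn (hfi τa τ) (hhfi τa τ) hτa hpos_left
    (hinc.mono (Icc_subset_Icc le_rfl hτb.le))
  have hGb := mul_integral_lt_integral_mul_of_strictMonoOn (hfi τ τb) (hhfi τ τb) hτb hpos_right
    (hinc.mono (Icc_subset_Icc hτa.le le_rfl))
  refine exists_unique_weight_lt_chord ?_ ?_ ?_
  · linarith [hC_sub τa τ, mul_pos hcH hFa]
  · linarith [hC_sub τ τb, mul_pos hcH hFb]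
  · rw [hU_sub, hU_sub, hC_sub, hC_sub]
    linarith [mul_lt_mul_of_pos_right hGa (mul_pos hcH hFb),
      mul_lt_mul_of_pos_right hGb (mul_pos hcH hFa)]

/-- On an interval `[τa, τb] ⊆ (0,1)` with `f > 0` where the
escalation benefit `mH - mL` is strictly increasing, for every interior
`τ ∈ (τa, τb)` there is a unique weight `α ∈ (0,1)` matching expected cost,
`α C τa + (1-α) C τb = C τ`, and the randomized mixture of the endpoint
thresholds strictly dominates the deterministic threshold at equal expected
cost: `α U τa + (1-α) U τb > U τ`. -/
theorem two_model_cascade_randomization_beats_deterministic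
    (f mL mH : ℝ → ℝ) (hf : Continuous f)
    (hf0 : ∀ s ∈ Set.Icc (0:ℝ) 1, 0 ≤ f s)
    (hfint : (∫ s in (0:ℝ)..1, f s) = 1)
    (hmL : Continuous mL) (hmH : Continuous mH)
    (cL cH : ℝ) (hcL : 0 ≤ cL) (hcH : 0 < cH)
    (C U : ℝ → ℝ)
    (hC : ∀ τ, C τ = cL + cH * ∫ s in (0:ℝ)..τ, f s)
    (hU : ∀ τ, U τ = (∫ s in (0:ℝ)..τ, mH s * f s) + ∫ s in τ..(1:ℝ), mL s * f s)
    (τa τb : ℝ) (hab : τa < τb) (hIcc : Set.Icc τa τb ⊆ Set.Ioo (0:ℝ) 1)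
    (hfpos : ∀ s ∈ Set.Icc τa τb, 0 < f s)
    (hinc : StrictMonoOn (fun s => mH s - mL s) (Set.Icc τa τb))
    (τ : ℝ) (hτ : τ ∈ Set.Ioo τa τb) :
    ∃ α ∈ Set.Ioo (0:ℝ) 1,
      α * C τa + (1 - α) * C τb = C τ ∧
      (∀ α' ∈ Set.Ioo (0:ℝ) 1, α' * C τa + (1 - α') * C τb = C τ → α' = α) ∧
      α * U τa + (1 - α) * U τb > U τ :=
  two_model_cascade_randomization_beats_deterministic_general f mL mH hf hmL hmH cL cH hcH C U hC hU
    τa τb hfpos hinc τ hτ
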